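/- arXiv:2605.06061 — 4 statements merged into one kernel-verified Lean document; each statement's English description precedes it below -/
import Mathlib

section
/- Coordinate recovery for GSWL: Let (K, x) and (K', x') be embedded simplicial complexes in ℝ^d whose vertex maps x and x' are injective, and color both with the same GSWL data (same color set C, same feature functions Φ_k, same injective HASH). Let σ ∈ K be a k-simplex, σ' ∈ K' a simplex, and L ≥ k. If c^L_σ = c^L_{σ'}, then dim σ' = k, the vertex-coordinate sets agree, {x_u : u ∈ σ} = {x'_u : u ∈ σ'}, and consequently the entry times agree: max_{u∈σ} ⟨x_u, ν⟩ = max_{u∈σ'} ⟨x'_u, ν⟩ for every ν in the unit sphere S^{d−1}. -/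
open Finset MeasureTheory
attribute [local instance] Classical.propDecidable
open scoped RealInnerProductSpace BigOperators ENNReal

/-- `ℝ^n` as Euclidean space. -/
abbrev Eu (n : ℕ) : Type := EuclideanSpace ℝ (Fin n)

/-- A finite abstract simplicial complex on the vertex type `V`:
a finite collection of nonempty finite vertex sets closed under taking nonempty subsets. -/
def IsComplex {V : Type*} [DecidableEq V] (K : Finset (Finset V)) : Prop :=
  (∀ σ ∈ K, σ.Nonempty) ∧ ∀ σ ∈ K, ∀ τ, τ ⊆ σ → τ.Nonempty → τ ∈ K

/-- The boundary `∂σ`: faces of `σ` in `K` of dimension `dim σ - 1`. -/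
def bdry {V : Type*} [DecidableEq V] (K : Finset (Finset V)) (σ : Finset V) :
    Finset (Finset V) :=
  K.filter fun τ => τ ⊆ σ ∧ τ.card + 1 = σ.card

/-- The coboundary `coface σ`: simplices of `K` of dimension `dim σ + 1` containing `σ`. -/
def cofc {V : Type*} [DecidableEq V] (K : Finset (Finset V)) (σ : Finset V) :
    Finset (Finset V) :=
  K.filter fun ρ => σ ⊆ ρ ∧ ρ.card = σ.card + 1

/-- GSWL data: a color set `C` containing all pairs `(k, f)` (the vertex case carrying a
point of `ℝ^d` as its feature), feature functions `Φ_k` on finite point sets in `ℝ^d`,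
and an injective `HASH` on triples (color, boundary multiset, coboundary multiset). -/
structure GSWLData (d : ℕ) (C F : Type*) where
  /-- the color `(0, p)` of a vertex embedded at `p ∈ ℝ^d` -/
  vcol : Eu d → C
  /-- the color `(k, f)` of a `k`-simplex carrying feature `f` -/
  scol : ℕ → F → C
  /-- the feature functions `Φ_k` -/
  feat : ℕ → Finset (Eu d) → F
  /-- the hash function -/
  hash : C → Multiset C → Multiset C → C
  vcol_inj : Function.Injective vcol
  scol_inj : ∀ ⦃k f k' f'⦄, scol k f = scol k' f' → k = k' ∧ f = f'
  vcol_ne_scol : ∀ p k f, vcol p ≠ scol k f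
  hash_inj : ∀ ⦃c M N c' M' N'⦄, hash c M N = hash c' M' N' → c = c' ∧ M = M' ∧ N = N'

/-- Initial GSWL color: `c⁰_{{v}} = (0, x_v)` on a vertex and
`c⁰_σ = (k, Φ_k {x_v : v ∈ σ})` on a `k`-simplex with `k ≥ 1`. -/
noncomputable def gcol0 {V : Type*} [DecidableEq V] {d : ℕ} {C F : Type*}
    (G : GSWLData d C F) (x : V → Eu d) (σ : Finset V) : C :=
  if h : ∃ v, σ = {v} then G.vcol (x h.choose)
  else G.scol (σ.card - 1) (G.feat (σ.card - 1) (σ.image x))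

/-- GSWL color refinement:
`c^{ℓ+1}_σ = HASH (c^ℓ_σ, {{c^ℓ_τ : τ ∈ ∂σ}}, {{c^ℓ_ρ : ρ ∈ coface σ}})`. -/
noncomputable def gcol {V : Type*} [DecidableEq V] {d : ℕ} {C F : Type*}
    (G : GSWLData d C F) (K : Finset (Finset V)) (x : V → Eu d) :
    ℕ → Finset V → C
  | 0 => gcol0 G x
  | ℓ + 1 => fun σ =>
      G.hash (gcol G K x ℓ σ) ((bdry K σ).val.map (gcol G K x ℓ))
        ((cofc K σ).val.map (gcol G K x ℓ))

/-- Entry time `t_ν(σ) = max_{u ∈ σ} ⟨x_u, ν⟩` of a simplex `σ` in direction `ν`. -/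
noncomputable def entry {V : Type*} {d : ℕ} (x : V → Eu d) (ν : Eu d) (σ : Finset V) : ℝ :=
  ((σ.image fun u => ⟪x u, ν⟫).max).unbotD 0

/-- The Euler Characteristic Transform
`ECT (K,x) (ν,t) = Σ_{σ∈K} (-1)^{dim σ} · 1{t_ν(σ) ≤ t}`. -/
noncomputable def ECT {V : Type*} {d : ℕ} (K : Finset (Finset V)) (x : V → Eu d)
    (ν : Eu d) (t : ℝ) : ℝ :=
  ∑ σ ∈ K, (-1 : ℝ) ^ (σ.card - 1) * (if entry x ν σ ≤ t then 1 else 0)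

lemma gcol_descend {V W : Type*} [DecidableEq V] [DecidableEq W] {d : ℕ} {C F : Type*}
    (G : GSWLData d C F) (K : Finset (Finset V)) (K' : Finset (Finset W))
    (x : V → Eu d) (x' : W → Eu d) (σ : Finset V) (σ' : Finset W) (ℓ : ℕ)
    (h : gcol G K x (ℓ+1) σ = gcol G K' x' (ℓ+1) σ') :
    gcol G K x ℓ σ = gcol G K' x' ℓ σ' ∧
      (bdry K σ).val.map (gcol G K x ℓ) = (bdry K' σ').val.map (gcol G K' x' ℓ) := by
  simp only [gcol] at h
  have := G.hash_inj h
  exact ⟨this.1, this.2.1⟩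

lemma gcol_descend0 {V W : Type*} [DecidableEq V] [DecidableEq W] {d : ℕ} {C F : Type*}
    (G : GSWLData d C F) (K : Finset (Finset V)) (K' : Finset (Finset W))
    (x : V → Eu d) (x' : W → Eu d) (σ : Finset V) (σ' : Finset W) :
    ∀ L, gcol G K x L σ = gcol G K' x' L σ' → gcol0 G x σ = gcol0 G x' σ' := by
  intro L
  induction L with
  | zero => intro h; simpa [gcol] using h
  | succ n ih => intro h; exact ih (gcol_descend G K K' x x' σ σ' n h).1

lemma gcol0_card {V W : Type*} [DecidableEq V] [DecidableEq W] {d : ℕ} {C F : Type*}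
    (G : GSWLData d C F) (x : V → Eu d) (x' : W → Eu d) (σ : Finset V) (σ' : Finset W)
    (hσne : σ.Nonempty) (hσ'ne : σ'.Nonempty)
    (h : gcol0 G x σ = gcol0 G x' σ') :
    σ'.card = σ.card ∧ (σ.card = 1 → σ.image x = σ'.image x') := by
  unfold gcol0 at h
  by_cases h1 : ∃ v, σ = {v}
  · by_cases h2 : ∃ w, σ' = {w}
    · rw [dif_pos h1, dif_pos h2] at h
      have hx := G.vcol_inj h
      have e1 : σ = {h1.choose} := h1.choose_spec
      have e2 : σ' = {h2.choose} := h2.choose_spec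
      constructor
      · rw [e1, e2]; simp
      · intro _; rw [e1, e2]; simp [hx]
    · rw [dif_pos h1, dif_neg h2] at h
      exact absurd h (G.vcol_ne_scol _ _ _)
  · by_cases h2 : ∃ w, σ' = {w}
    · rw [dif_neg h1, dif_pos h2] at h
      exact absurd h.symm (G.vcol_ne_scol _ _ _)
    · rw [dif_neg h1, dif_neg h2] at h
      have hcc := (G.scol_inj h).1
      have hσ1 : 1 ≤ σ.card := hσne.card_pos
      have hσ'1 : 1 ≤ σ'.card := hσ'ne.card_pos
      constructor
      · omega
      · intro hc1
        exact absurd (Finset.card_eq_one.mp hc1) h1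

lemma gswl_aux {d : ℕ} {C F : Type*} (G : GSWLData d C F) :
    ∀ (k : ℕ), ∀ {V W : Type*} [DecidableEq V] [DecidableEq W]
    (K : Finset (Finset V)), IsComplex K → ∀ (K' : Finset (Finset W)), IsComplex K' →
    ∀ (x : V → Eu d) (x' : W → Eu d) (σ : Finset V), σ ∈ K → ∀ (σ' : Finset W), σ' ∈ K' →
    ∀ (L : ℕ), σ.card = k + 1 → k ≤ L →
    gcol G K x L σ = gcol G K' x' L σ' →
    σ'.card = k + 1 ∧ σ.image x ⊆ σ'.image x' := by
  intro k
  induction k with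
  | zero =>
    intro V W _ _ K hK K' hK' x x' σ hσ σ' hσ' L hk _ hc
    have h0 := gcol_descend0 G K K' x x' σ σ' L hc
    have hne : σ.Nonempty := hK.1 σ hσ
    have hne' : σ'.Nonempty := hK'.1 σ' hσ'
    obtain ⟨hcard, himg⟩ := gcol0_card G x x' σ σ' hne hne' h0
    rw [hk] at hcard
    exact ⟨hcard, le_of_eq (himg hk)⟩
  | succ k ih =>
    intro V W _ _ K hK K' hK' x x' σ hσ σ' hσ' L hk hkL hc
    have h0 := gcol_descend0 G K K' x x' σ σ' L hc
    have hne : σ.Nonempty := hK.1 σ hσ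
    have hne' : σ'.Nonempty := hK'.1 σ' hσ'
    obtain ⟨hcard, -⟩ := gcol0_card G x x' σ σ' hne hne' h0
    rw [hk] at hcard
    refine ⟨hcard, ?_⟩
    -- L ≥ k+1 ≥ 1, write L = M+1
    obtain ⟨M, rfl⟩ : ∃ M, L = M + 1 := ⟨L - 1, by omega⟩
    obtain ⟨-, hbd⟩ := gcol_descend G K K' x x' σ σ' M hc
    intro p hp
    obtain ⟨v, hv, rfl⟩ := Finset.mem_image.mp hp
    -- pick u ∈ σ with u ≠ v
    have h2 : 1 < σ.card := by omega
    obtain ⟨u, hu, huv⟩ := Finset.exists_mem_ne h2 v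
    set τ : Finset V := σ.erase u with hτdef
    have hτsub : τ ⊆ σ := Finset.erase_subset _ _
    have hvτ : v ∈ τ := Finset.mem_erase.mpr ⟨huv.symm, hv⟩
    have hτne : τ.Nonempty := ⟨v, hvτ⟩
    have hτK : τ ∈ K := hK.2 σ hσ τ hτsub hτne
    have hτcard : τ.card = k + 1 := by
      rw [hτdef, Finset.card_erase_of_mem hu, hk]; omega
    have hτbd : τ ∈ bdry K σ := by
      rw [bdry, Finset.mem_filter]
      exact ⟨hτK, hτsub, by omega⟩
    -- match τ with some τ' ∈ bdry K' σ'
    have hmem : gcol G K x M τ ∈ (bdry K' σ').val.map (gcol G K' x' M) := by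
      rw [← hbd]
      exact Multiset.mem_map_of_mem _ hτbd
    obtain ⟨τ', hτ'bd, hτc⟩ := Multiset.mem_map.mp hmem
    have hτ'bd' : τ' ∈ bdry K' σ' := hτ'bd
    rw [bdry, Finset.mem_filter] at hτ'bd'
    obtain ⟨hτ'K, hτ'sub, -⟩ := hτ'bd'
    have := ih K hK K' hK' x x' τ hτK τ' hτ'K M hτcard (by omega) hτc.symm
    have hsub : τ.image x ⊆ τ'.image x' := this.2
    have : x v ∈ τ'.image x' := hsub (Finset.mem_image_of_mem x hvτ)
    exact Finset.image_subset_image hτ'sub this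

/-- **Coordinate recovery (Lemma 1).** If two simplices of two embedded simplicial
complexes (with injective vertex maps, colored with the same GSWL data) receive the same
GSWL color at round `L ≥ k`, where `k = dim σ`, then `dim σ' = k`, the unordered
vertex-coordinate sets agree, and the entry times agree in every unit direction. -/
theorem gswl_coordinate_recovery
    {V W : Type*} [DecidableEq V] [DecidableEq W] {d : ℕ} {C F : Type*}
    (G : GSWLData d C F)
    (K : Finset (Finset V)) (hK : IsComplex K)
    (K' : Finset (Finset W)) (hK' : IsComplex K')
    (x : V → Eu d) (hx : Function.Injective x)
    (x' : W → Eu d) (hx' : Function.Injective x')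
    (σ : Finset V) (hσ : σ ∈ K) (σ' : Finset W) (hσ' : σ' ∈ K')
    (k L : ℕ) (hk : σ.card = k + 1) (hL : k ≤ L)
    (hc : gcol G K x L σ = gcol G K' x' L σ') :
    σ'.card = k + 1 ∧ σ.image x = σ'.image x' ∧
      ∀ ν : Eu d, ‖ν‖ = 1 → entry x ν σ = entry x' ν σ' := by
  obtain ⟨hcard', hsub⟩ :=
    gswl_aux G k K hK K' hK' x x' σ hσ σ' hσ' L hk hL hc
  obtain ⟨-, hsub'⟩ :=
    gswl_aux G k K' hK' K hK x' x σ' hσ' σ hσ L hcard' hL hc.symm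
  have himg : σ.image x = σ'.image x' := Finset.Subset.antisymm hsub hsub'
  refine ⟨hcard', himg, ?_⟩
  intro ν _
  have h1 : σ.image (fun u => ⟪x u, ν⟫) = (σ.image x).image (fun p => ⟪p, ν⟫) := by
    rw [Finset.image_image]; rfl
  have h2 : σ'.image (fun u => ⟪x' u, ν⟫) = (σ'.image x').image (fun p => ⟪p, ν⟫) := by
    rw [Finset.image_image]; rfl
  unfold entry
  rw [h1, h2, himg]
end

section
/- GSWL color determines hidden state: color two embedded simplicial complexes (K₁, x₁) and (K₂, x₂) in ℝ^d with the same GSWL data, and run the simplicial message-passing architecture on both with the same parameters E, (φ_ℓ), (ψ_ℓ), (μ_ℓ). Then for every round ℓ ≥ 0 and all simplices σ ∈ K₁, σ' ∈ K₂, if c^ℓ_σ = c^ℓ_{σ'} then h^ℓ_σ = h^ℓ_{σ'}. Equivalently, for each ℓ there is a function F_ℓ : C → ℝ^H with h^ℓ_σ = F_ℓ(c^ℓ_σ) for every simplex σ of either complex. -/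
open Finset MeasureTheory
attribute [local instance] Classical.propDecidable
open scoped RealInnerProductSpace BigOperators ENNReal

/-- Hidden states of the simplicial message-passing architecture: `h⁰_σ = E (c⁰_σ)` and
`h^{ℓ+1}_σ = μ_ℓ (h^ℓ_σ, Σ_{τ∈∂σ} φ_ℓ h^ℓ_τ, Σ_{ρ∈coface σ} ψ_ℓ h^ℓ_ρ)`. -/
noncomputable def hid {V : Type*} [DecidableEq V] {d : ℕ} {C F : Type*} {H : ℕ}
    (G : GSWLData d C F) (E : C → Eu H) (φ ψ : ℕ → Eu H → Eu H)
    (μ : ℕ → Eu H × Eu H × Eu H → Eu H)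
    (K : Finset (Finset V)) (x : V → Eu d) : ℕ → Finset V → Eu H
  | 0 => fun σ => E (gcol0 G x σ)
  | ℓ + 1 => fun σ =>
      μ ℓ (hid G E φ ψ μ K x ℓ σ,
        ∑ τ ∈ bdry K σ, φ ℓ (hid G E φ ψ μ K x ℓ τ),
        ∑ ρ ∈ cofc K σ, ψ ℓ (hid G E φ ψ μ K x ℓ ρ))

/-- The color-to-hidden-state decoding functions `F_ℓ`. -/
noncomputable def Faux {d : ℕ} {C F : Type*} {H : ℕ}
    (G : GSWLData d C F) (E : C → Eu H) (φ ψ : ℕ → Eu H → Eu H)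
    (μ : ℕ → Eu H × Eu H × Eu H → Eu H) : ℕ → C → Eu H
  | 0 => E
  | ℓ + 1 => fun c' =>
      if h : ∃ t : C × Multiset C × Multiset C, c' = G.hash t.1 t.2.1 t.2.2 then
        μ ℓ (Faux G E φ ψ μ ℓ h.choose.1,
          (h.choose.2.1.map (fun a => φ ℓ (Faux G E φ ψ μ ℓ a))).sum,
          (h.choose.2.2.map (fun a => ψ ℓ (Faux G E φ ψ μ ℓ a))).sum)
      else 0

lemma Faux_hash {d : ℕ} {C F : Type*} {H : ℕ}
    (G : GSWLData d C F) (E : C → Eu H) (φ ψ : ℕ → Eu H → Eu H)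
    (μ : ℕ → Eu H × Eu H × Eu H → Eu H) (ℓ : ℕ) (c : C) (M N : Multiset C) :
    Faux G E φ ψ μ (ℓ + 1) (G.hash c M N) =
      μ ℓ (Faux G E φ ψ μ ℓ c,
        (M.map (fun a => φ ℓ (Faux G E φ ψ μ ℓ a))).sum,
        (N.map (fun a => ψ ℓ (Faux G E φ ψ μ ℓ a))).sum) := by
  have h : ∃ t : C × Multiset C × Multiset C, G.hash c M N = G.hash t.1 t.2.1 t.2.2 :=
    ⟨⟨c, M, N⟩, rfl⟩
  simp only [Faux, dif_pos h]
  obtain ⟨h1, h2, h3⟩ := G.hash_inj h.choose_spec.symm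
  rw [h1, h2, h3]

lemma hid_eq_Faux {V : Type*} [DecidableEq V] {d : ℕ} {C F : Type*} {H : ℕ}
    (G : GSWLData d C F) (E : C → Eu H) (φ ψ : ℕ → Eu H → Eu H)
    (μ : ℕ → Eu H × Eu H × Eu H → Eu H)
    (K : Finset (Finset V)) (x : V → Eu d) :
    ∀ ℓ (σ : Finset V),
      hid G E φ ψ μ K x ℓ σ = Faux G E φ ψ μ ℓ (gcol G K x ℓ σ) := by
  intro ℓ
  induction ℓ with
  | zero => intro σ; rfl
  | succ ℓ ih =>
    intro σ
    have e : gcol G K x (ℓ + 1) σ =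
        G.hash (gcol G K x ℓ σ) ((bdry K σ).val.map (gcol G K x ℓ))
          ((cofc K σ).val.map (gcol G K x ℓ)) := rfl
    rw [e, Faux_hash]
    simp only [hid, Multiset.map_map, Function.comp]
    rw [Finset.sum, Finset.sum]
    rw [ih σ,
      Multiset.map_congr rfl (fun τ _ => by rw [ih τ] :
        ∀ τ ∈ (bdry K σ).val, φ ℓ (hid G E φ ψ μ K x ℓ τ) =
          φ ℓ (Faux G E φ ψ μ ℓ (gcol G K x ℓ τ))),
      Multiset.map_congr rfl (fun ρ _ => by rw [ih ρ] :
        ∀ ρ ∈ (cofc K σ).val, ψ ℓ (hid G E φ ψ μ K x ℓ ρ) =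
          ψ ℓ (Faux G E φ ψ μ ℓ (gcol G K x ℓ ρ)))]

/-- **GSWL color determines hidden state.** Running the simplicial message-passing
architecture with the same parameters on two embedded complexes colored with the same
GSWL data, equal round-`ℓ` GSWL colors imply equal round-`ℓ` hidden states; equivalently,
for each `ℓ` there is a function `F_ℓ : C → ℝ^H` with `h^ℓ_σ = F_ℓ (c^ℓ_σ)` on all
simplices of either complex. -/
theorem gswl_color_determines_hidden_state
    {V W : Type*} [DecidableEq V] [DecidableEq W] {d : ℕ} {C F : Type*} {H : ℕ}
    (G : GSWLData d C F)
    (K₁ : Finset (Finset V)) (hK₁ : IsComplex K₁)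
    (K₂ : Finset (Finset W)) (hK₂ : IsComplex K₂)
    (x₁ : V → Eu d) (x₂ : W → Eu d)
    (E : C → Eu H) (φ ψ : ℕ → Eu H → Eu H) (μ : ℕ → Eu H × Eu H × Eu H → Eu H) :
    (∀ ℓ : ℕ, ∀ σ ∈ K₁, ∀ σ' ∈ K₂,
        gcol G K₁ x₁ ℓ σ = gcol G K₂ x₂ ℓ σ' →
        hid G E φ ψ μ K₁ x₁ ℓ σ = hid G E φ ψ μ K₂ x₂ ℓ σ') ∧
      ∀ ℓ : ℕ, ∃ Fℓ : C → Eu H,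
        (∀ σ ∈ K₁, hid G E φ ψ μ K₁ x₁ ℓ σ = Fℓ (gcol G K₁ x₁ ℓ σ)) ∧
        (∀ σ' ∈ K₂, hid G E φ ψ μ K₂ x₂ ℓ σ' = Fℓ (gcol G K₂ x₂ ℓ σ')) := by
  constructor
  · intro ℓ σ _ σ' _ hc
    rw [hid_eq_Faux G E φ ψ μ K₁ x₁ ℓ σ, hid_eq_Faux G E φ ψ μ K₂ x₂ ℓ σ', hc]
  · intro ℓ
    exact ⟨Faux G E φ ψ μ ℓ, fun σ _ => hid_eq_Faux G E φ ψ μ K₁ x₁ ℓ σ,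
      fun σ' _ => hid_eq_Faux G E φ ψ μ K₂ x₂ ℓ σ'⟩
end

section
/- Upper bound on geometry-aware simplicial message passing (Theorem 2): Fix L ≥ 0 and color two embedded simplicial complexes K₁, K₂ in ℝ^d with the same GSWL data. Suppose K₁ ≡_L K₂ (GSWL-L equivalence). Then for every choice of architecture parameters E, (φ_ℓ), (ψ_ℓ), (μ_ℓ), every q ∈ ℕ, every map Ψ : ℝ^H → ℝ^q, and every family of per-dimension weights η_k ∈ ℝ, the readouts agree: Σ_{σ∈K₁} η_{dim σ} Ψ(h^L_σ) = Σ_{σ∈K₂} η_{dim σ} Ψ(h^L_σ). -/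
open Finset MeasureTheory
attribute [local instance] Classical.propDecidable
open scoped RealInnerProductSpace BigOperators ENNReal

lemma multiset_pair_map {α β γ X : Type*} (g₁ : α → γ) (g₂ : β → γ)
    (f₁ : α → X) (f₂ : β → X) :
    ∀ (s : Multiset α) (t : Multiset β),
    (∀ a ∈ s, ∀ b ∈ t, g₁ a = g₂ b → f₁ a = f₂ b) →
    s.map g₁ = t.map g₂ → s.map f₁ = t.map f₂ := by
  intro s
  induction s using Multiset.induction_on with
  | empty =>
    intro t _ h
    have : t = 0 := by
      simpa using (Multiset.map_eq_zero.mp h.symm)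
    simp [this]
  | cons a s ih =>
    intro t hf h
    have ha : g₁ a ∈ t.map g₂ := by
      rw [← h]; simp
    obtain ⟨b, hb, hgb⟩ := Multiset.mem_map.mp ha
    obtain ⟨t', rfl⟩ := Multiset.exists_cons_of_mem hb
    rw [Multiset.map_cons, Multiset.map_cons, ← hgb] at h
    have htail : s.map g₁ = t'.map g₂ := (Multiset.cons_inj_right _).mp h
    have hfab : f₁ a = f₂ b := hf a (by simp) b (by simp) hgb.symm
    have htail' : s.map f₁ = t'.map f₂ := by
      refine ih t' (fun a' ha' b' hb' => hf a' (by simp [ha']) b' (by simp [hb'])) htail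
    rw [Multiset.map_cons, Multiset.map_cons, hfab, htail']

lemma gswl_key
    {V W : Type*} [DecidableEq V] [DecidableEq W] {d : ℕ} {C F : Type*}
    (G : GSWLData d C F)
    (K₁ : Finset (Finset V)) (hK₁ : IsComplex K₁)
    (K₂ : Finset (Finset W)) (hK₂ : IsComplex K₂)
    (x₁ : V → Eu d) (x₂ : W → Eu d)
    {H : ℕ} (E : C → Eu H) (φ ψ : ℕ → Eu H → Eu H)
    (μ : ℕ → Eu H × Eu H × Eu H → Eu H) :
    ∀ (ℓ : ℕ), ∀ σ ∈ K₁, ∀ τ ∈ K₂, gcol G K₁ x₁ ℓ σ = gcol G K₂ x₂ ℓ τ →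
      σ.card = τ.card ∧ hid G E φ ψ μ K₁ x₁ ℓ σ = hid G E φ ψ μ K₂ x₂ ℓ τ := by
  intro ℓ
  induction ℓ with
  | zero =>
    intro σ hσ τ hτ h
    have h0 : gcol0 G x₁ σ = gcol0 G x₂ τ := h
    unfold gcol0 at h0
    have hcard : σ.card = τ.card := by
      by_cases h₁ : ∃ v, σ = {v} <;> by_cases h₂ : ∃ w, τ = {w}
      · obtain ⟨v, rfl⟩ := h₁; obtain ⟨w, rfl⟩ := h₂; simp
      · rw [dif_pos h₁, dif_neg h₂] at h0
        exact absurd h0 (G.vcol_ne_scol _ _ _)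
      · rw [dif_neg h₁, dif_pos h₂] at h0
        exact absurd h0.symm (G.vcol_ne_scol _ _ _)
      · rw [dif_neg h₁, dif_neg h₂] at h0
        have := (G.scol_inj h0).1
        have hσ1 : 1 ≤ σ.card := Finset.card_pos.mpr (hK₁.1 σ hσ)
        have hτ1 : 1 ≤ τ.card := Finset.card_pos.mpr (hK₂.1 τ hτ)
        omega
    exact ⟨hcard, congrArg E h⟩
  | succ ℓ ih =>
    intro σ hσ τ hτ h
    simp only [gcol] at h
    obtain ⟨hc, hb, hco⟩ := G.hash_inj h
    have hself := ih σ hσ τ hτ hc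
    have hbsub : ∀ a ∈ (bdry K₁ σ).val, a ∈ K₁ := fun a haa =>
      (Finset.mem_filter.mp haa).1
    have hbsub' : ∀ a ∈ (bdry K₂ τ).val, a ∈ K₂ := fun a haa =>
      (Finset.mem_filter.mp haa).1
    have hcsub : ∀ a ∈ (cofc K₁ σ).val, a ∈ K₁ := fun a haa =>
      (Finset.mem_filter.mp haa).1
    have hcsub' : ∀ a ∈ (cofc K₂ τ).val, a ∈ K₂ := fun a haa =>
      (Finset.mem_filter.mp haa).1
    have hbmap : (bdry K₁ σ).val.map (fun a => φ ℓ (hid G E φ ψ μ K₁ x₁ ℓ a)) =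
        (bdry K₂ τ).val.map (fun a => φ ℓ (hid G E φ ψ μ K₂ x₂ ℓ a)) :=
      multiset_pair_map _ _ _ _ _ _
        (fun a ha b hb' hgab => by
          rw [(ih a (hbsub a ha) b (hbsub' b hb') hgab).2]) hb
    have hcmap : (cofc K₁ σ).val.map (fun a => ψ ℓ (hid G E φ ψ μ K₁ x₁ ℓ a)) =
        (cofc K₂ τ).val.map (fun a => ψ ℓ (hid G E φ ψ μ K₂ x₂ ℓ a)) :=
      multiset_pair_map _ _ _ _ _ _
        (fun a ha b hb' hgab => by
          rw [(ih a (hcsub a ha) b (hcsub' b hb') hgab).2]) hco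
    refine ⟨hself.1, ?_⟩
    simp only [hid, hself.2, Finset.sum, hbmap, hcmap]

/-- **Upper bound (Theorem 2).** If `K₁ ≡_L K₂` under GSWL (equal multisets of round-`L`
colors), then for every choice of architecture parameters and every readout
`z(K) = Σ_{σ∈K} η_{dim σ} Ψ(h^L_σ)` with per-dimension weights `η` and any map `Ψ`,
the readouts agree. -/
theorem gswl_upper_bound
    {V W : Type*} [DecidableEq V] [DecidableEq W] {d : ℕ} {C F : Type*}
    (G : GSWLData d C F)
    (K₁ : Finset (Finset V)) (hK₁ : IsComplex K₁)
    (K₂ : Finset (Finset W)) (hK₂ : IsComplex K₂)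
    (x₁ : V → Eu d) (x₂ : W → Eu d) (L : ℕ)
    (hequiv : K₁.val.map (gcol G K₁ x₁ L) = K₂.val.map (gcol G K₂ x₂ L))
    {H : ℕ} (E : C → Eu H) (φ ψ : ℕ → Eu H → Eu H)
    (μ : ℕ → Eu H × Eu H × Eu H → Eu H)
    (q : ℕ) (Ψ : Eu H → Eu q) (η : ℕ → ℝ) :
    ∑ σ ∈ K₁, η (σ.card - 1) • Ψ (hid G E φ ψ μ K₁ x₁ L σ) =
      ∑ σ ∈ K₂, η (σ.card - 1) • Ψ (hid G E φ ψ μ K₂ x₂ L σ) := by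
  have key := gswl_key G K₁ hK₁ K₂ hK₂ x₁ x₂ E φ ψ μ L
  have hmap : K₁.val.map (fun σ => η (σ.card - 1) • Ψ (hid G E φ ψ μ K₁ x₁ L σ)) =
      K₂.val.map (fun σ => η (σ.card - 1) • Ψ (hid G E φ ψ μ K₂ x₂ L σ)) :=
    multiset_pair_map _ _ _ _ _ _
      (fun a ha b hb hg => by
        obtain ⟨hcard, hhid⟩ := key a ha b hb hg
        rw [hcard, hhid]) hequiv
  simp only [Finset.sum, hmap]
end

section
/- Finite-family realizability (Theorem 3): Let F be a finite family of finite embedded simplicial complexes in ℝ^d, colored with common GSWL data, and fix L ≥ 0. For ℓ ∈ {0,…,L} let m_ℓ be the number of distinct round-ℓ GSWL colors occurring among all simplices of all complexes in F, and let m = max_{0≤ℓ≤L} m_ℓ. Then for any hidden dimension H ≥ 3m there exist functions E : C → ℝ^H, φ_ℓ, ψ_ℓ : ℝ^H → ℝ^H, μ_ℓ : ℝ^H × ℝ^H × ℝ^H → ℝ^H (for ℓ < L), and Ψ : ℝ^H → ℝ^{m_L} such that, setting z(K) = Σ_{σ∈K} Ψ(h^L_σ), one has z(K₁) = z(K₂)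 if and only if K₁ ≡_L K₂, for all K₁, K₂ ∈ F. Moreover each of these functions is determined by its values on finitely many inputs, so they can be chosen from any function class with the finite interpolation property (a class able to realize any prescribed finite set of input–output pairs with pairwise distinct inputs). -/
open Finset MeasureTheory
attribute [local instance] Classical.propDecidable
open scoped RealInnerProductSpace BigOperators ENNReal

/-- A function class `M` has the *finite interpolation property* if it can realize any
prescribed finite set of input–output pairs (with pairwise distinct inputs). -/
def FIP {α β : Type*} (M : Set (α → β)) : Prop :=
  ∀ (s : Finset α) (g : α → β), ∃ f ∈ M, ∀ a ∈ s, f a = g a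

section Aux
variable {C : Type*}

/-- index of a color in a finset of colors -/
noncomputable def nidx (S : Finset C) (c : C) : ℕ := S.toList.idxOf c

/-- encoding of a color as a vector in `ℝ^H` -/
noncomputable def encV (H : ℕ) (S : Finset C) (c : C) : Eu H :=
  if h : nidx S c < H then EuclideanSpace.single (⟨nidx S c, h⟩ : Fin H) (1:ℝ) else 0

lemma nidx_lt_card {S : Finset C} {c : C} (hc : c ∈ S) : nidx S c < S.card := by
  have := List.idxOf_lt_length_iff.2 (Finset.mem_toList.2 hc)
  simpa [nidx, Finset.length_toList] using this

lemma nidx_inj {S : Finset C} {c c' : C} (hc : c ∈ S) (hc' : c' ∈ S)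
    (h : nidx S c = nidx S c') : c = c' :=
  (List.idxOf_inj (Finset.mem_toList.2 hc)).1 h

lemma encV_inj {H : ℕ} {S : Finset C} (hS : S.card ≤ H) {c c' : C}
    (hc : c ∈ S) (hc' : c' ∈ S) (h : encV H S c = encV H S c') : c = c' := by
  have h1 : nidx S c < H := lt_of_lt_of_le (nidx_lt_card hc) hS
  have h2 : nidx S c' < H := lt_of_lt_of_le (nidx_lt_card hc') hS
  apply nidx_inj hc hc'
  rw [encV, encV, dif_pos h1, dif_pos h2] at h
  have := congrArg (fun v : Eu H => v (⟨nidx S c, h1⟩ : Fin H)) h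
  simp only [EuclideanSpace.single_apply] at this
  by_contra hne
  have : (1:ℝ) = 0 := by
    simpa [Fin.ext_iff, hne] using this
  norm_num at this

lemma multiset_sum_apply {H : ℕ} (M : Multiset C) (f : C → Eu H) (k : Fin H) :
    (M.map f).sum k = (M.map fun c => f c k).sum := by
  induction M using Multiset.induction_on with
  | empty => simp
  | cons a M ih =>
    simp only [Multiset.map_cons, Multiset.sum_cons]
    rw [← ih]; rfl

lemma indicator_sum_count (M : Multiset C) (c : C) :
    (M.map fun c' => if c' = c then (1:ℝ) else 0).sum = (M.count c : ℝ) := by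
  induction M using Multiset.induction_on with
  | empty => simp
  | cons a M ih =>
    simp only [Multiset.map_cons, Multiset.sum_cons, ih, Multiset.count_cons]
    by_cases h : a = c
    · subst h; simp [add_comm]
    · have h2 : ¬ c = a := fun hh => h hh.symm
      simp [h, h2]

/-- key recovery lemma: sums of encodings determine the multiset -/
lemma sum_encV_inj {H : ℕ} {S : Finset C} (hS : S.card ≤ H) {M M' : Multiset C}
    (hM : ∀ c ∈ M, c ∈ S) (hM' : ∀ c ∈ M', c ∈ S)
    (h : (M.map (encV H S)).sum = (M'.map (encV H S)).sum) : M = M' := by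
  ext c
  by_cases hc : c ∈ S
  · have hk : nidx S c < H := lt_of_lt_of_le (nidx_lt_card hc) hS
    have key : ∀ (N : Multiset C), (∀ c' ∈ N, c' ∈ S) →
        (N.map (encV H S)).sum (⟨nidx S c, hk⟩ : Fin H) = (N.count c : ℝ) := by
      intro N hN
      rw [multiset_sum_apply]
      rw [← indicator_sum_count N c]
      congr 1
      apply Multiset.map_congr rfl
      intro c' hc'
      have hc'S := hN c' hc'
      have h1 : nidx S c' < H := lt_of_lt_of_le (nidx_lt_card hc'S) hS
      rw [encV, dif_pos h1, EuclideanSpace.single_apply]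
      by_cases he : c' = c
      · subst he; simp
      · have : ¬ ((⟨nidx S c, hk⟩ : Fin H) = ⟨nidx S c', h1⟩) := by
          simp only [Fin.mk.injEq]
          intro heq
          exact he (nidx_inj hc'S hc heq.symm)
        simp [this, he]
    have h1 := key M hM
    have h2 := key M' hM'
    have := congrArg (fun v : Eu H => v (⟨nidx S c, hk⟩ : Fin H)) h
    dsimp only at this
    rw [show ((M.map (encV H S)).sum : Eu H) (⟨nidx S c, hk⟩ : Fin H) = _ from h1,
      show ((M'.map (encV H S)).sum : Eu H) (⟨nidx S c, hk⟩ : Fin H) = _ from h2] at this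
    exact_mod_cast this
  · rw [Multiset.count_eq_zero_of_notMem (fun hm => hc (hM c hm)),
      Multiset.count_eq_zero_of_notMem (fun hm => hc (hM' c hm))]

end Aux
section Key
variable {V : Type*} [DecidableEq V] {d : ℕ} {C F : Type*} (G : GSWLData d C F)
  {ι : Type*} [Fintype ι] (Ks : ι → Finset (Finset V)) (xs : ι → V → Eu d)

/-- the set of colors occurring at round `ℓ` -/
noncomputable def Scol (ℓ : ℕ) : Finset C :=
  Finset.univ.biUnion fun i => (Ks i).image (gcol G (Ks i) (xs i) ℓ)

lemma gcol_mem_Scol {i : ι} {σ : Finset V} (hσ : σ ∈ Ks i) (ℓ : ℕ) :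
    gcol G (Ks i) (xs i) ℓ σ ∈ Scol G Ks xs ℓ :=
  Finset.mem_biUnion.2 ⟨i, Finset.mem_univ i, Finset.mem_image_of_mem _ hσ⟩

lemma gcol_succ (K : Finset (Finset V)) (x : V → Eu d) (ℓ : ℕ) (σ : Finset V) :
    gcol G K x (ℓ+1) σ = G.hash (gcol G K x ℓ σ) ((bdry K σ).val.map (gcol G K x ℓ))
      ((cofc K σ).val.map (gcol G K x ℓ)) := rfl

theorem key (L H n : ℕ)
    (hcard : ∀ ℓ, ℓ ≤ L → (Scol G Ks xs ℓ).card ≤ H)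
    (hn : (Scol G Ks xs L).card ≤ n)
    (ME : Set (C → Eu H)) (Mφ Mψ : Set (Eu H → Eu H))
    (Mμ : Set (Eu H × Eu H × Eu H → Eu H)) (MΨ : Set (Eu H → Eu n))
    (hME : FIP ME) (hMφ : FIP Mφ) (hMψ : FIP Mψ) (hMμ : FIP Mμ) (hMΨ : FIP MΨ) :
    ∃ E ∈ ME, ∃ φ ψ : ℕ → Eu H → Eu H,
      (∀ ℓ, φ ℓ ∈ Mφ) ∧ (∀ ℓ, ψ ℓ ∈ Mψ) ∧
      ∃ μ : ℕ → Eu H × Eu H × Eu H → Eu H, (∀ ℓ, μ ℓ ∈ Mμ) ∧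
      ∃ Ψ ∈ MΨ,
        ∀ i j : ι,
          (∑ σ ∈ Ks i, Ψ (hid G E φ ψ μ (Ks i) (xs i) L σ) =
              ∑ σ ∈ Ks j, Ψ (hid G E φ ψ μ (Ks j) (xs j) L σ)) ↔
            (Ks i).val.map (gcol G (Ks i) (xs i) L) =
              (Ks j).val.map (gcol G (Ks j) (xs j) L) := by
  classical
  set S : ℕ → Finset C := Scol G Ks xs with hS
  set gc : ι → ℕ → Finset V → C := fun i => gcol G (Ks i) (xs i) with hgc
  set e : ℕ → C → Eu H := fun ℓ => encV H (S ℓ) with he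
  -- the encoder
  obtain ⟨E, hEM, hE⟩ := hME (S 0) (fun c => e 0 c)
  -- message functions: identity on encoded colors
  have hφex : ∀ ℓ, ∃ f ∈ Mφ, ∀ c ∈ S ℓ, f (e ℓ c) = e ℓ c := by
    intro ℓ
    obtain ⟨f, hf1, hf2⟩ := hMφ ((S ℓ).image (e ℓ)) id
    exact ⟨f, hf1, fun c hc => hf2 _ (Finset.mem_image_of_mem _ hc)⟩
  have hψex : ∀ ℓ, ∃ f ∈ Mψ, ∀ c ∈ S ℓ, f (e ℓ c) = e ℓ c := by
    intro ℓ
    obtain ⟨f, hf1, hf2⟩ := hMψ ((S ℓ).image (e ℓ)) id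
    exact ⟨f, hf1, fun c hc => hf2 _ (Finset.mem_image_of_mem _ hc)⟩
  set φ : ℕ → Eu H → Eu H := fun ℓ => (hφex ℓ).choose with hφdef
  set ψ : ℕ → Eu H → Eu H := fun ℓ => (hψex ℓ).choose with hψdef
  have hφM : ∀ ℓ, φ ℓ ∈ Mφ := fun ℓ => (hφex ℓ).choose_spec.1
  have hψM : ∀ ℓ, ψ ℓ ∈ Mψ := fun ℓ => (hψex ℓ).choose_spec.1
  have hφ : ∀ ℓ, ∀ c ∈ S ℓ, φ ℓ (e ℓ c) = e ℓ c := fun ℓ => (hφex ℓ).choose_spec.2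
  have hψ : ∀ ℓ, ∀ c ∈ S ℓ, ψ ℓ (e ℓ c) = e ℓ c := fun ℓ => (hψex ℓ).choose_spec.2
  -- the update functions
  set trip : ℕ → ι → Finset V → Eu H × Eu H × Eu H := fun ℓ i σ =>
    (e ℓ (gc i ℓ σ), ∑ τ ∈ bdry (Ks i) σ, e ℓ (gc i ℓ τ),
      ∑ ρ ∈ cofc (Ks i) σ, e ℓ (gc i ℓ ρ)) with htrip
  have hsum : ∀ (i : ι) (T : Finset (Finset V)) (ℓ : ℕ),
      (∑ τ ∈ T, e ℓ (gc i ℓ τ)) = ((T.val.map (gc i ℓ)).map (encV H (S ℓ))).sum := by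
    intro i T ℓ
    rw [Multiset.map_map]
    rfl
  have welldef : ∀ ℓ, ℓ < L → ∀ i i' σ σ', σ ∈ Ks i → σ' ∈ Ks i' →
      trip ℓ i σ = trip ℓ i' σ' → gc i (ℓ+1) σ = gc i' (ℓ+1) σ' := by
    intro ℓ hℓ i i' σ σ' hσ hσ' htr
    have hcℓ := hcard ℓ (le_of_lt hℓ)
    have h1 : gc i ℓ σ = gc i' ℓ σ' := by
      have := congrArg Prod.fst htr
      exact encV_inj hcℓ (gcol_mem_Scol G Ks xs hσ ℓ) (gcol_mem_Scol G Ks xs hσ' ℓ) this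
    have h2 : (bdry (Ks i) σ).val.map (gc i ℓ) = (bdry (Ks i') σ').val.map (gc i' ℓ) := by
      have h2' := congrArg (fun p => p.2.1) htr
      simp only [htrip] at h2'
      rw [hsum, hsum] at h2'
      refine sum_encV_inj hcℓ ?_ ?_ h2'
      · intro c hc
        obtain ⟨τ, hτ, rfl⟩ := Multiset.mem_map.1 hc
        exact gcol_mem_Scol G Ks xs (Finset.mem_of_mem_filter τ hτ) ℓ
      · intro c hc
        obtain ⟨τ, hτ, rfl⟩ := Multiset.mem_map.1 hc
        exact gcol_mem_Scol G Ks xs (Finset.mem_of_mem_filter τ hτ) ℓ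
    have h3 : (cofc (Ks i) σ).val.map (gc i ℓ) = (cofc (Ks i') σ').val.map (gc i' ℓ) := by
      have h3' := congrArg (fun p => p.2.2) htr
      simp only [htrip] at h3'
      rw [hsum, hsum] at h3'
      refine sum_encV_inj hcℓ ?_ ?_ h3'
      · intro c hc
        obtain ⟨τ, hτ, rfl⟩ := Multiset.mem_map.1 hc
        exact gcol_mem_Scol G Ks xs (Finset.mem_of_mem_filter τ hτ) ℓ
      · intro c hc
        obtain ⟨τ, hτ, rfl⟩ := Multiset.mem_map.1 hc
        exact gcol_mem_Scol G Ks xs (Finset.mem_of_mem_filter τ hτ) ℓ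
    show gcol G (Ks i) (xs i) (ℓ+1) σ = gcol G (Ks i') (xs i') (ℓ+1) σ'
    rw [gcol_succ, gcol_succ]
    rw [show gcol G (Ks i) (xs i) ℓ = gc i ℓ from rfl,
      show gcol G (Ks i') (xs i') ℓ = gc i' ℓ from rfl, h1, h2, h3]
  have hμex : ∀ ℓ, ∃ f ∈ Mμ, ℓ < L → ∀ i, ∀ σ ∈ Ks i,
      f (trip ℓ i σ) = e (ℓ+1) (gc i (ℓ+1) σ) := by
    intro ℓ
    by_cases hℓ : ℓ < L
    · set g : Eu H × Eu H × Eu H → Eu H := fun p =>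
        if h : ∃ i σ, σ ∈ Ks i ∧ p = trip ℓ i σ then
          e (ℓ+1) (gc h.choose (ℓ+1) h.choose_spec.choose) else 0 with hgdef
      obtain ⟨f, hf1, hf2⟩ :=
        hMμ ((Finset.univ : Finset ι).biUnion fun i => (Ks i).image (trip ℓ i)) g
      refine ⟨f, hf1, fun _ i σ hσ => ?_⟩
      have hmem : trip ℓ i σ ∈ (Finset.univ : Finset ι).biUnion
          fun i => (Ks i).image (trip ℓ i) :=
        Finset.mem_biUnion.2 ⟨i, Finset.mem_univ i, Finset.mem_image_of_mem _ hσ⟩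
      rw [hf2 _ hmem]
      simp only [hgdef]
      have hex : ∃ i' σ', σ' ∈ Ks i' ∧ trip ℓ i σ = trip ℓ i' σ' := ⟨i, σ, hσ, rfl⟩
      rw [dif_pos hex]
      have h1 := hex.choose_spec.choose_spec.1
      have h2 := hex.choose_spec.choose_spec.2
      rw [welldef ℓ hℓ _ _ _ _ h1 hσ h2.symm]
    · obtain ⟨f, hf1, _⟩ := hMμ ∅ (fun _ => 0)
      exact ⟨f, hf1, fun h => absurd h hℓ⟩
  set μ : ℕ → Eu H × Eu H × Eu H → Eu H := fun ℓ => (hμex ℓ).choose with hμdef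
  have hμM : ∀ ℓ, μ ℓ ∈ Mμ := fun ℓ => (hμex ℓ).choose_spec.1
  have hμ : ∀ ℓ, ℓ < L → ∀ i, ∀ σ ∈ Ks i, μ ℓ (trip ℓ i σ) = e (ℓ+1) (gc i (ℓ+1) σ) :=
    fun ℓ => (hμex ℓ).choose_spec.2
  -- the readout
  obtain ⟨Ψ, hΨM, hΨ0⟩ := hMΨ ((S L).image (e L)) (fun v =>
    if h : ∃ c, c ∈ S L ∧ e L c = v then encV n (S L) h.choose else 0)
  have hΨ : ∀ c ∈ S L, Ψ (e L c) = encV n (S L) c := by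
    intro c hc
    rw [hΨ0 _ (Finset.mem_image_of_mem _ hc)]
    have hex : ∃ c', c' ∈ S L ∧ e L c' = e L c := ⟨c, hc, rfl⟩
    rw [dif_pos hex]
    exact congrArg _ (encV_inj (hcard L le_rfl) hex.choose_spec.1 hc hex.choose_spec.2)
  -- the invariant
  have inv : ∀ ℓ, ℓ ≤ L → ∀ i, ∀ σ ∈ Ks i,
      hid G E φ ψ μ (Ks i) (xs i) ℓ σ = e ℓ (gc i ℓ σ) := by
    intro ℓ
    induction ℓ with
    | zero =>
      intro _ i σ hσ
      show E (gcol0 G (xs i) σ) = _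
      exact hE _ (gcol_mem_Scol G Ks xs hσ 0)
    | succ ℓ ih =>
      intro hℓ i σ hσ
      have hℓL : ℓ < L := hℓ
      show μ ℓ (hid G E φ ψ μ (Ks i) (xs i) ℓ σ,
          ∑ τ ∈ bdry (Ks i) σ, φ ℓ (hid G E φ ψ μ (Ks i) (xs i) ℓ τ),
          ∑ ρ ∈ cofc (Ks i) σ, ψ ℓ (hid G E φ ψ μ (Ks i) (xs i) ℓ ρ)) = _
      have e1 : hid G E φ ψ μ (Ks i) (xs i) ℓ σ = e ℓ (gc i ℓ σ) :=
        ih (le_of_lt hℓL) i σ hσ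
      have e2 : ∑ τ ∈ bdry (Ks i) σ, φ ℓ (hid G E φ ψ μ (Ks i) (xs i) ℓ τ) =
          ∑ τ ∈ bdry (Ks i) σ, e ℓ (gc i ℓ τ) := by
        refine Finset.sum_congr rfl fun τ hτ => ?_
        have hτK : τ ∈ Ks i := Finset.mem_of_mem_filter τ hτ
        rw [ih (le_of_lt hℓL) i τ hτK, hφ ℓ _ (gcol_mem_Scol G Ks xs hτK ℓ)]
      have e3 : ∑ ρ ∈ cofc (Ks i) σ, ψ ℓ (hid G E φ ψ μ (Ks i) (xs i) ℓ ρ) =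
          ∑ ρ ∈ cofc (Ks i) σ, e ℓ (gc i ℓ ρ) := by
        refine Finset.sum_congr rfl fun ρ hρ => ?_
        have hρK : ρ ∈ Ks i := Finset.mem_of_mem_filter ρ hρ
        rw [ih (le_of_lt hℓL) i ρ hρK, hψ ℓ _ (gcol_mem_Scol G Ks xs hρK ℓ)]
      rw [e1, e2, e3]
      exact hμ ℓ hℓL i σ hσ
  refine ⟨E, hEM, φ, ψ, hφM, hψM, μ, hμM, Ψ, hΨM, fun i j => ?_⟩
  have hz : ∀ i : ι, ∑ σ ∈ Ks i, Ψ (hid G E φ ψ μ (Ks i) (xs i) L σ) =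
      (((Ks i).val.map (gc i L)).map (encV n (S L))).sum := by
    intro i
    rw [Multiset.map_map]
    refine Finset.sum_congr rfl fun σ hσ => ?_
    rw [inv L le_rfl i σ hσ, hΨ _ (gcol_mem_Scol G Ks xs hσ L)]
    rfl
  rw [hz i, hz j]
  constructor
  · intro h
    refine sum_encV_inj hn ?_ ?_ h
    · intro c hc
      obtain ⟨σ, hσ, rfl⟩ := Multiset.mem_map.1 hc
      exact gcol_mem_Scol G Ks xs hσ L
    · intro c hc
      obtain ⟨σ, hσ, rfl⟩ := Multiset.mem_map.1 hc
      exact gcol_mem_Scol G Ks xs hσ L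
  · intro h
    rw [hgc] at *
    rw [h]

end Key
/-- **Finite-family realizability (Theorem 3).** For a finite family `𝓕 = (Ks i, xs i)` of
finite embedded simplicial complexes colored with common GSWL data, with `m_ℓ` the number
of distinct round-`ℓ` GSWL colors across the family, `m = max_{ℓ ≤ L} m_ℓ`, and any hidden
dimension `H ≥ 3m`, there exist parameters `E, φ_ℓ, ψ_ℓ, μ_ℓ` and a readout
`Ψ : ℝ^H → ℝ^{m_L}` such that `z(K) = Σ_{σ∈K} Ψ(h^L_σ)` satisfies `z(K₁) = z(K₂)` iff
`K₁ ≡_L K₂`, for all members of the family. Moreover the parameters can be chosen from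
any function classes with the finite interpolation property. -/
theorem finite_family_realizability
    {V : Type*} [DecidableEq V] {d : ℕ} {C F : Type*}
    (G : GSWLData d C F)
    {ι : Type*} [Fintype ι]
    (Ks : ι → Finset (Finset V)) (xs : ι → V → Eu d)
    (hKs : ∀ i, IsComplex (Ks i)) (L : ℕ)
    (mℓ : ℕ → ℕ)
    (hmℓ : ∀ ℓ, mℓ ℓ =
      (Finset.univ.biUnion fun i => (Ks i).image (gcol G (Ks i) (xs i) ℓ)).card)
    (m : ℕ) (hm : m = (Finset.range (L + 1)).sup mℓ)
    (H : ℕ) (hH : 3 * m ≤ H) :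
    (∃ (E : C → Eu H) (φ ψ : ℕ → Eu H → Eu H) (μ : ℕ → Eu H × Eu H × Eu H → Eu H)
        (Ψ : Eu H → Eu (mℓ L)),
        ∀ i j : ι,
          (∑ σ ∈ Ks i, Ψ (hid G E φ ψ μ (Ks i) (xs i) L σ) =
              ∑ σ ∈ Ks j, Ψ (hid G E φ ψ μ (Ks j) (xs j) L σ)) ↔
            (Ks i).val.map (gcol G (Ks i) (xs i) L) =
              (Ks j).val.map (gcol G (Ks j) (xs j) L)) ∧
      ∀ (ME : Set (C → Eu H)) (Mφ Mψ : Set (Eu H → Eu H))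
        (Mμ : Set (Eu H × Eu H × Eu H → Eu H)) (MΨ : Set (Eu H → Eu (mℓ L))),
        FIP ME → FIP Mφ → FIP Mψ → FIP Mμ → FIP MΨ →
        ∃ E ∈ ME, ∃ φ ψ : ℕ → Eu H → Eu H,
          (∀ ℓ, φ ℓ ∈ Mφ) ∧ (∀ ℓ, ψ ℓ ∈ Mψ) ∧
          ∃ μ : ℕ → Eu H × Eu H × Eu H → Eu H, (∀ ℓ, μ ℓ ∈ Mμ) ∧
          ∃ Ψ ∈ MΨ,
            ∀ i j : ι,
              (∑ σ ∈ Ks i, Ψ (hid G E φ ψ μ (Ks i) (xs i) L σ) =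
                  ∑ σ ∈ Ks j, Ψ (hid G E φ ψ μ (Ks j) (xs j) L σ)) ↔
                (Ks i).val.map (gcol G (Ks i) (xs i) L) =
                  (Ks j).val.map (gcol G (Ks j) (xs j) L) := by
  have hcard : ∀ ℓ, ℓ ≤ L → (Scol G Ks xs ℓ).card ≤ H := by
    intro ℓ hℓ
    have h1 : (Scol G Ks xs ℓ).card = mℓ ℓ := (hmℓ ℓ).symm
    have h2 : mℓ ℓ ≤ m := by
      rw [hm]
      exact Finset.le_sup (Finset.mem_range.2 (Nat.lt_succ_of_le hℓ))
    omega
  have hn : (Scol G Ks xs L).card ≤ mℓ L := le_of_eq (hmℓ L).symm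
  constructor
  · have h1 : FIP (Set.univ : Set (C → Eu H)) := fun s g => ⟨g, Set.mem_univ g, fun a _ => rfl⟩
    have h2 : FIP (Set.univ : Set (Eu H → Eu H)) := fun s g => ⟨g, Set.mem_univ g, fun a _ => rfl⟩
    have h3 : FIP (Set.univ : Set (Eu H × Eu H × Eu H → Eu H)) :=
      fun s g => ⟨g, Set.mem_univ g, fun a _ => rfl⟩
    have h4 : FIP (Set.univ : Set (Eu H → Eu (mℓ L))) :=
      fun s g => ⟨g, Set.mem_univ g, fun a _ => rfl⟩
    obtain ⟨E, _, φ, ψ, _, _, μ, _, Ψ, _, hiff⟩ :=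
      key G Ks xs L H (mℓ L) hcard hn Set.univ Set.univ Set.univ Set.univ Set.univ
        h1 h2 h2 h3 h4
    exact ⟨E, φ, ψ, μ, Ψ, hiff⟩
  · intro ME Mφ Mψ Mμ MΨ hME hMφ hMψ hMμ hMΨ
    exact key G Ks xs L H (mℓ L) hcard hn ME Mφ Mψ Mμ MΨ hME hMφ hMψ hMμ hMΨ
end
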